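/- arXiv:math/0501372 — 2 statements merged into one kernel-verified Lean document; each statement's English description precedes it below -/
import Mathlib

section
/- Let κ and λ be infinite cardinals, let S be a ⟨∨,0⟩-semilattice, let (a_ξ)_{ξ<κ} be an increasing family in S with a_0 = 0 and let (b_η)_{η<λ} be a decreasing family in S with a_ξ ≤ b_η for all ξ < κ and η < λ. Then the map σ : P*_{κ,λ} → S is a ⟨∨,0⟩-homomorphism: σ sends the least element of P*_{κ,λ} to 0 and σ(x ∨ y) = σ(x) ∨ σ(y) for all x, y ∈ P*_{κ,λ}. -/
open Set Cardinal

/-- Membership in the Boolean subalgebra of the powerset of `P` generated by the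
lower subsets of `P`: the smallest family of subsets of `P` containing all lower
sets and closed under complementation and (binary) union (hence also under binary
intersection, and containing `∅` and `P`). -/
inductive IntMem (P : Type*) [Preorder P] : Set P → Prop
  | lower (s : Set P) : IsLowerSet s → IntMem P s
  | compl (s : Set P) : IntMem P s → IntMem P sᶜ
  | union (s t : Set P) : IntMem P s → IntMem P t → IntMem P (s ∪ t)

/-- `Int P`: the Boolean subalgebra of the powerset of `P` generated by the lower subsets
of `P`, viewed as a set of subsets of `P`. -/
def IntP (P : Type*) [Preorder P] : Set (Set P) := {s | IntMem P s}

open Classical in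
/-- `χ_o` : sends a subset of `{β | β < o}` to `false` if it is bounded (contained in some
`α < o`) and to `true` otherwise. -/
noncomputable def chiO (o : Ordinal) (x : Set ↥(Set.Iio o)) : Bool :=
  if ∃ α < o, ∀ β ∈ x, (β : Ordinal) < α then false else true

/-- The ambient Boolean algebra `(Set κ) × (Set λ) × (Set λ)` in which
`A_{κ,λ} = Int κ × Int λ × Int λ` lives. -/
abbrev Amb (κ lam : Cardinal) : Type _ :=
  Set ↥(Set.Iio κ.ord) × Set ↥(Set.Iio lam.ord) × Set ↥(Set.Iio lam.ord)

/-- `A_{κ,λ} = Int κ × Int λ × Int λ`. -/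
def ASet (κ lam : Cardinal) : Set (Amb κ lam) :=
  {p | p.1 ∈ IntP ↥(Set.Iio κ.ord) ∧ p.2.1 ∈ IntP ↥(Set.Iio lam.ord) ∧
       p.2.2 ∈ IntP ↥(Set.Iio lam.ord)}

/-- `U_{κ,λ} = {⟨x0,x1,x2⟩ ∈ A_{κ,λ} : χ_κ(x0) = χ_λ(x1) = χ_λ(x2)}`. -/
def USet (κ lam : Cardinal) : Set (Amb κ lam) :=
  {p ∈ ASet κ lam | chiO κ.ord p.1 = chiO lam.ord p.2.1 ∧
    chiO lam.ord p.2.1 = chiO lam.ord p.2.2}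

/-- `V_{κ,λ} = {⟨x0,x1,x2⟩ ∈ A_{κ,λ} : χ_κ(x0) = χ_λ(x1)}`. -/
def VSet (κ lam : Cardinal) : Set (Amb κ lam) :=
  {p ∈ ASet κ lam | chiO κ.ord p.1 = chiO lam.ord p.2.1}

/-- `P*_{κ,λ} = {⟨x0,x1,x2⟩ ∈ A_{κ,λ} : χ_κ(x0) = 0 or x1 ∪ x2 ≠ ∅}`. -/
def PstarSet (κ lam : Cardinal) : Set (Amb κ lam) :=
  {p ∈ ASet κ lam | chiO κ.ord p.1 = false ∨ p.2.1 ∪ p.2.2 ≠ ∅}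

/-- `P_{κ,λ} = {⟨x0,x1,x2⟩ ∈ A_{κ,λ} : χ_κ(x0) = χ_λ(x1) ∨ χ_λ(x2)}`. -/
def PkSet (κ lam : Cardinal) : Set (Amb κ lam) :=
  {p ∈ ASet κ lam | chiO κ.ord p.1 = chiO lam.ord p.2.1 ⊔ chiO lam.ord p.2.2}

open Classical in
/-- The map `σ = σ_{⃗a,⃗b} : P*_{κ,λ} → S` : `σ(⟨x0,x1,x2⟩) = a_{sup x0}` if
`x1 ∪ x2 = ∅` (in which case `x0` is bounded, so `sup x0 < κ`), and
`σ(⟨x0,x1,x2⟩) = b_{min (x1 ∪ x2)}` otherwise.  (Outside of `P*_{κ,λ}` the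
value of this function is irrelevant; junk value `⊥` is used when the
corresponding index is out of range.) -/
noncomputable def sigmaM (κ lam : Cardinal) {S : Type*} [SemilatticeSup S] [OrderBot S]
    (a : ↥(Set.Iio κ.ord) → S) (b : ↥(Set.Iio lam.ord) → S) (p : Amb κ lam) : S :=
  if p.2.1 ∪ p.2.2 = ∅ then
    if h : sSup (Subtype.val '' p.1) < κ.ord then a ⟨sSup (Subtype.val '' p.1), h⟩ else ⊥
  else
    if h : sInf (Subtype.val '' (p.2.1 ∪ p.2.2)) < lam.ord then
      b ⟨sInf (Subtype.val '' (p.2.1 ∪ p.2.2)), h⟩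
    else ⊥

/-- The measure `μ = μ_{⃗a,⃗b}` on `P_{κ,λ}` : `μ(x, y) = σ(x \ y)`. -/
noncomputable def muM (κ lam : Cardinal) {S : Type*} [SemilatticeSup S] [OrderBot S]
    (a : ↥(Set.Iio κ.ord) → S) (b : ↥(Set.Iio lam.ord) → S) (p q : Amb κ lam) : S :=
  sigmaM κ lam a b (p \ q)


private lemma ordSSup_union (s t : Set Ordinal) (hs : BddAbove s) (ht : BddAbove t) :
    sSup (s ∪ t) = sSup s ⊔ sSup t := by
  apply le_antisymm
  · apply csSup_le'
    rintro x (hx | hx)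
    · exact le_sup_of_le_left (le_csSup hs hx)
    · exact le_sup_of_le_right (le_csSup ht hx)
  · apply sup_le
    · rcases s.eq_empty_or_nonempty with h | h
      · simp [h]
      · exact csSup_le_csSup (hs.union ht) h Set.subset_union_left
    · rcases t.eq_empty_or_nonempty with h | h
      · simp [h]
      · exact csSup_le_csSup (hs.union ht) h Set.subset_union_right

private lemma ordSInf_union (s t : Set Ordinal) (hs : s.Nonempty) (ht : t.Nonempty) :
    sInf (s ∪ t) = sInf s ⊓ sInf t := by
  apply le_antisymm
  · exact le_inf (csInf_le_csInf (OrderBot.bddBelow _) hs Set.subset_union_left)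
      (csInf_le_csInf (OrderBot.bddBelow _) ht Set.subset_union_right)
  · have hmem := csInf_mem (hs.mono (Set.subset_union_left : s ⊆ s ∪ t))
    rcases hmem with h | h
    · exact inf_le_of_left_le (csInf_le (OrderBot.bddBelow _) h)
    · exact inf_le_of_right_le (csInf_le (OrderBot.bddBelow _) h)

private lemma chiO_eq_false_iff (o : Ordinal) (x : Set ↥(Set.Iio o)) :
    chiO o x = false ↔ ∃ α < o, ∀ β ∈ x, (β : Ordinal) < α := by
  unfold chiO
  split <;> simp_all

private lemma sSup_lt_of_chi_false {o : Ordinal} {x : Set ↥(Set.Iio o)}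
    (h : chiO o x = false) : sSup (Subtype.val '' x) < o := by
  obtain ⟨α, hα, hb⟩ := (chiO_eq_false_iff o x).1 h
  refine lt_of_le_of_lt (csSup_le' ?_) hα
  rintro v ⟨β, hβ, rfl⟩
  exact (hb β hβ).le

private lemma bddAbove_image_val {o : Ordinal} (x : Set ↥(Set.Iio o)) :
    BddAbove (Subtype.val '' x) := by
  refine ⟨o, ?_⟩
  rintro v ⟨β, hβ, rfl⟩
  exact β.2.le

private lemma sInf_image_lt {o : Ordinal} {u : Set ↥(Set.Iio o)} (h : u.Nonempty) :
    sInf (Subtype.val '' u) < o := by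
  obtain ⟨β, hβ, hval⟩ := csInf_mem (h.image Subtype.val)
  exact hval ▸ β.2

private lemma sigma_sup_mixed (κ lam : Cardinal) {S : Type*} [SemilatticeSup S] [OrderBot S]
    (a : ↥(Set.Iio κ.ord) → S) (b : ↥(Set.Iio lam.ord) → S)
    (hab : ∀ ξ η, a ξ ≤ b η) (x y : Amb κ lam) (hx : x ∈ PstarSet κ lam)
    (h1 : x.2.1 ∪ x.2.2 = ∅) (h2 : y.2.1 ∪ y.2.2 ≠ ∅) :
    sigmaM κ lam a b (x ⊔ y) = sigmaM κ lam a b x ⊔ sigmaM κ lam a b y := by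
  have hcx : chiO κ.ord x.1 = false := hx.2.resolve_right (by simp [h1])
  have hx1 : sSup (Subtype.val '' x.1) < κ.ord := sSup_lt_of_chi_false hcx
  have hcomp : (x ⊔ y).2.1 ∪ (x ⊔ y).2.2 = y.2.1 ∪ y.2.2 := by
    show (x.2.1 ∪ y.2.1) ∪ (x.2.2 ∪ y.2.2) = _
    rw [Set.union_union_union_comm, h1, Set.empty_union]
  have hne : (x ⊔ y).2.1 ∪ (x ⊔ y).2.2 ≠ ∅ := by rw [hcomp]; exact h2
  have hyne : (y.2.1 ∪ y.2.2).Nonempty := Set.nonempty_iff_ne_empty.2 h2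
  have hinf : sInf (Subtype.val '' (y.2.1 ∪ y.2.2)) < lam.ord := sInf_image_lt hyne
  unfold sigmaM
  rw [if_neg hne, if_neg h2, if_pos h1, hcomp, dif_pos hx1, dif_pos hinf]
  exact (sup_eq_right.2 (hab _ _)).symm

/-- Let `κ, λ` be infinite cardinals, `S` a `⟨∨,0⟩`-semilattice,
`(a_ξ)_{ξ<κ}` an increasing family in `S` with `a_0 = 0` and `(b_η)_{η<λ}` a decreasing
family in `S` with `a_ξ ≤ b_η` for all `ξ, η`.  Then `σ : P*_{κ,λ} → S` is a
`⟨∨,0⟩`-homomorphism: it sends the least element of `P*_{κ,λ}` to `0` and preserves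
binary joins of elements of `P*_{κ,λ}`. -/
theorem sigma_is_sup_zero_hom (κ lam : Cardinal) (hκ : ℵ₀ ≤ κ) (hlam : ℵ₀ ≤ lam)
    {S : Type*} [SemilatticeSup S] [OrderBot S]
    (a : ↥(Set.Iio κ.ord) → S) (b : ↥(Set.Iio lam.ord) → S)
    (ha : Monotone a) (hb : Antitone b)
    (ha0 : ∀ ξ : ↥(Set.Iio κ.ord), (ξ : Ordinal) = 0 → a ξ = ⊥)
    (hab : ∀ ξ η, a ξ ≤ b η) :
    sigmaM κ lam a b ⊥ = ⊥ ∧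
    ∀ x ∈ PstarSet κ lam, ∀ y ∈ PstarSet κ lam,
      sigmaM κ lam a b (x ⊔ y) = sigmaM κ lam a b x ⊔ sigmaM κ lam a b y := by
  have hκ0 : (0 : Ordinal) < κ.ord := by
    have : (0:Cardinal) < κ := lt_of_lt_of_le aleph0_pos hκ
    simpa using Cardinal.ord_lt_ord.2 this
  constructor
  · have hbot : (⊥ : Amb κ lam).2.1 ∪ (⊥ : Amb κ lam).2.2 = ∅ :=
      Set.union_empty (∅ : Set ↥(Set.Iio lam.ord))
    have himg : Subtype.val '' ((⊥ : Amb κ lam).1) = ∅ :=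
      Set.image_empty Subtype.val
    unfold sigmaM
    rw [if_pos hbot, himg]
    have hs : sSup (∅ : Set Ordinal) = 0 := by simp
    rw [hs, dif_pos hκ0]
    exact ha0 _ rfl
  · intro x hx y hy
    by_cases h1 : x.2.1 ∪ x.2.2 = ∅
    · by_cases h2 : y.2.1 ∪ y.2.2 = ∅
      · -- both empty
        have hcx : chiO κ.ord x.1 = false := hx.2.resolve_right (by simp [h1])
        have hcy : chiO κ.ord y.1 = false := hy.2.resolve_right (by simp [h2])
        have hx1 := sSup_lt_of_chi_false hcx
        have hy1 := sSup_lt_of_chi_false hcy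
        have hjoin : (x ⊔ y).2.1 ∪ (x ⊔ y).2.2 = ∅ := by
          show (x.2.1 ∪ y.2.1) ∪ (x.2.2 ∪ y.2.2) = ∅
          rw [Set.union_union_union_comm, h1, h2, Set.union_empty]
        have hsupeq : sSup (Subtype.val '' (x ⊔ y).1)
            = sSup (Subtype.val '' x.1) ⊔ sSup (Subtype.val '' y.1) := by
          show sSup (Subtype.val '' (x.1 ∪ y.1)) = _
          rw [Set.image_union, ordSSup_union _ _ (bddAbove_image_val x.1) (bddAbove_image_val y.1)]
        unfold sigmaM
        rw [if_pos hjoin, if_pos h1, if_pos h2, hsupeq, dif_pos hx1, dif_pos hy1]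
        rcases le_total (sSup (Subtype.val '' x.1)) (sSup (Subtype.val '' y.1)) with hle | hle
        · rw [sup_eq_right.2 hle, dif_pos hy1]
          exact (sup_eq_right.2 (ha (Subtype.mk_le_mk.2 hle))).symm
        · rw [sup_eq_left.2 hle, dif_pos hx1]
          exact (sup_eq_left.2 (ha (Subtype.mk_le_mk.2 hle))).symm
      · exact sigma_sup_mixed κ lam a b hab x y hx h1 h2
    · by_cases h2 : y.2.1 ∪ y.2.2 = ∅
      · rw [sup_comm x y, sup_comm (sigmaM κ lam a b x)]
        exact sigma_sup_mixed κ lam a b hab y x hy h2 h1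
      · -- both nonempty
        have hxne : (x.2.1 ∪ x.2.2).Nonempty := Set.nonempty_iff_ne_empty.2 h1
        have hyne : (y.2.1 ∪ y.2.2).Nonempty := Set.nonempty_iff_ne_empty.2 h2
        have hinfx := sInf_image_lt hxne
        have hinfy := sInf_image_lt hyne
        have hcomp : (x ⊔ y).2.1 ∪ (x ⊔ y).2.2 = (x.2.1 ∪ x.2.2) ∪ (y.2.1 ∪ y.2.2) := by
          show (x.2.1 ∪ y.2.1) ∪ (x.2.2 ∪ y.2.2) = _
          rw [Set.union_union_union_comm]
        have hne : (x ⊔ y).2.1 ∪ (x ⊔ y).2.2 ≠ ∅ := by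
          rw [hcomp]
          exact fun h => h1 (Set.union_empty_iff.1 h).1
        have hinfeq : sInf (Subtype.val '' ((x ⊔ y).2.1 ∪ (x ⊔ y).2.2))
            = sInf (Subtype.val '' (x.2.1 ∪ x.2.2)) ⊓ sInf (Subtype.val '' (y.2.1 ∪ y.2.2)) := by
          rw [hcomp, Set.image_union,
            ordSInf_union _ _ (hxne.image Subtype.val) (hyne.image Subtype.val)]
        unfold sigmaM
        rw [if_neg hne, if_neg h1, if_neg h2, hinfeq, dif_pos hinfx, dif_pos hinfy]
        rcases le_total (sInf (Subtype.val '' (x.2.1 ∪ x.2.2)))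
            (sInf (Subtype.val '' (y.2.1 ∪ y.2.2))) with hle | hle
        · rw [inf_eq_left.2 hle, dif_pos hinfx]
          exact (sup_eq_left.2 (hb (Subtype.mk_le_mk.2 hle))).symm
        · rw [inf_eq_right.2 hle, dif_pos hinfy]
          exact (sup_eq_right.2 (hb (Subtype.mk_le_mk.2 hle))).symm
end

section
/- Let κ and λ be infinite cardinals, let S be a ⟨∨,0⟩-semilattice, let (a_ξ)_{ξ<κ} be an increasing family in S with a_0 = 0 and let (b_η)_{η<λ} be a decreasing family in S with a_ξ ≤ b_η for all ξ < κ and η < λ. Then the map μ : P_{κ,λ} × P_{κ,λ} → S defined by μ(x,y) = σ(x \ y) is an S-valued measure on the partial lattice P_{κ,λ}, i.e.: (1) μ(x,y) = 0 whenever x ≤ y; (2) μ(x,z) ≤ μ(x,y) ∨ μ(y,z) for all x, y, z ∈ P_{κ,λ}; (3) μ(a,b) = ⋁_{x∈X} μ(x,b) whenever X is a nonempty finite subset of P_{κ,λ} whose join ⋁X, computed in A_{κ,λ}, equals a and lies in P_{κ,λ}; (4) μ(a,b) = ⋁_{y∈Y} μ(a,y) whenever Y is a nonempty finite subset of P_{κ,λ}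 whose meet ⋀Y, computed in A_{κ,λ}, equals b and lies in P_{κ,λ}. -/
open Set Cardinal

/-!
`σ` is a join-homomorphism on `P*_{κ,λ}`: under a join the ordinal `sup x₀` (used while the
tail `x₁ ∪ x₂` is empty) becomes a maximum and `min (x₁ ∪ x₂)` becomes a minimum, so the
monotonicity of `a`, the antitonicity of `b` and `a ≤ b` give the value of a join in each of
the three cases. Every member of `Int κ` is bounded or has bounded complement, hence
`x \ y ∈ P*_{κ,λ}` for `x, y ∈ P_{κ,λ}`: if the tail of `x \ y` is empty and `x₀` is unbounded,
then so is `y₀`. The measure axioms then follow from `x \ z ≤ (x \ y) ⊔ (y \ z)`,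
`(⋁ X) \ q = ⋁ (x \ q)` and `p \ ⋀ Y = ⋁ (p \ y)`.
-/

section Bounded

variable {P : Type*} [LinearOrder P] {s t : Set P}

theorem Set.Bounded.union_lt (hs : s.Bounded (· < ·)) (ht : t.Bounded (· < ·)) :
    (s ∪ t).Bounded (· < ·) := by
  obtain ⟨α, hα⟩ := hs
  obtain ⟨β, hβ⟩ := ht
  refine ⟨max α β, fun γ hγ => ?_⟩
  rcases hγ with hγ | hγ
  · exact lt_max_of_lt_left (hα γ hγ)
  · exact lt_max_of_lt_right (hβ γ hγ)

theorem IntMem.bounded_or_bounded_compl [Nonempty P] (hs : IntMem P s) :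
    s.Bounded (· < ·) ∨ sᶜ.Bounded (· < ·) := by
  induction hs with
  | lower s hs =>
    by_cases h : s = Set.univ
    · exact Or.inr ⟨Classical.arbitrary P, by simp [h]⟩
    · obtain ⟨β, hβ⟩ := (ne_univ_iff_exists_notMem s).1 h
      exact Or.inl ⟨β, fun γ hγ => lt_of_not_ge fun hβγ => hβ (hs hβγ hγ)⟩
  | compl s _ ih => rwa [compl_compl, or_comm]
  | union s t _ _ ihs iht =>
    rcases ihs with hs | hs
    · rcases iht with ht | ht
      · exact Or.inl (hs.union_lt ht)
      · exact Or.inr (ht.mono (compl_subset_compl.2 subset_union_right))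
    · exact Or.inr (hs.mono (compl_subset_compl.2 subset_union_left))

end Bounded

section Ordinal

variable {o : Ordinal} {x y : Set (Iio o)}

theorem chiO_eq_false_iff_s9 : chiO o x = false ↔ x.Bounded (· < ·) := by
  simp only [chiO, Set.Bounded, Subtype.exists, mem_Iio, ← Subtype.coe_lt_coe]
  split_ifs with h <;> simpa using h

theorem chiO_mono (h : x ⊆ y) : chiO o x ≤ chiO o y := by
  cases hy : chiO o y
  · rw [chiO_eq_false_iff_s9] at hy
    rw [chiO_eq_false_iff_s9.2 (hy.mono h)]
  · exact le_top

theorem bddAbove_val_image (x : Set (Iio o)) : BddAbove (Subtype.val '' x) := by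
  refine ⟨o, ?_⟩
  rintro _ ⟨β, _, rfl⟩
  exact β.2.le

theorem Set.Bounded.sSup_val_image_lt (h : x.Bounded (· < ·)) : sSup (Subtype.val '' x) < o := by
  obtain ⟨α, hα⟩ := h
  refine (csSup_le' ?_).trans_lt α.2
  rintro _ ⟨β, hβ, rfl⟩
  exact (hα β hβ).le

theorem Set.Nonempty.sInf_val_image_lt (h : x.Nonempty) : sInf (Subtype.val '' x) < o := by
  obtain ⟨β, hβ⟩ := h
  exact (csInf_le (OrderBot.bddBelow _) (mem_image_of_mem _ hβ)).trans_lt β.2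

variable {S : Type*} [SemilatticeSup S] [OrderBot S] {f : Iio o → S} {α β : Ordinal}

noncomputable def extendBot (f : Iio o → S) (α : Ordinal) : S :=
  if h : α < o then f ⟨α, h⟩ else ⊥

theorem extendBot_of_lt (h : α < o) : extendBot f α = f ⟨α, h⟩ := dif_pos h

theorem Monotone.extendBot_max (hf : Monotone f) (hα : α < o) (hβ : β < o) :
    extendBot f (max α β) = extendBot f α ⊔ extendBot f β := by
  rcases le_total α β with h | h
  · rw [max_eq_right h, extendBot_of_lt hα, extendBot_of_lt hβ]
    exact (sup_eq_right.2 (hf (Subtype.mk_le_mk.2 h))).symm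
  · rw [max_eq_left h, extendBot_of_lt hα, extendBot_of_lt hβ]
    exact (sup_eq_left.2 (hf (Subtype.mk_le_mk.2 h))).symm

theorem Antitone.extendBot_min (hf : Antitone f) (hα : α < o) (hβ : β < o) :
    extendBot f (min α β) = extendBot f α ⊔ extendBot f β := by
  rcases le_total α β with h | h
  · rw [min_eq_left h, extendBot_of_lt hα, extendBot_of_lt hβ]
    exact (sup_eq_left.2 (hf (Subtype.mk_le_mk.2 h))).symm
  · rw [min_eq_right h, extendBot_of_lt hα, extendBot_of_lt hβ]
    exact (sup_eq_right.2 (hf (Subtype.mk_le_mk.2 h))).symm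

end Ordinal

section Measure

variable {κ lam : Cardinal} {S : Type*} [SemilatticeSup S] [OrderBot S]
  {a : Iio κ.ord → S} {b : Iio lam.ord → S}

/-- The defining condition of `P*_{κ,λ}`, without membership in `A_{κ,λ}`. -/
def PstarCond (κ lam : Cardinal) : Set (Amb κ lam) :=
  {r | r.2.1 ∪ r.2.2 = ∅ → r.1.Bounded (· < ·)}

theorem tail_sup (r r' : Amb κ lam) :
    (r ⊔ r').2.1 ∪ (r ⊔ r').2.2 = (r.2.1 ∪ r.2.2) ∪ (r'.2.1 ∪ r'.2.2) :=
  union_union_union_comm _ _ _ _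

theorem supClosed_pstarCond : SupClosed (PstarCond κ lam) := by
  intro r hr r' hr' h
  rw [tail_sup, union_empty_iff] at h
  exact (hr h.1).union_lt (hr' h.2)

theorem sigmaM_eq (r : Amb κ lam) :
    sigmaM κ lam a b r = if r.2.1 ∪ r.2.2 = ∅ then extendBot a (sSup (Subtype.val '' r.1))
      else extendBot b (sInf (Subtype.val '' (r.2.1 ∪ r.2.2))) :=
  rfl

theorem sigmaM_sup (ha : Monotone a) (hb : Antitone b) (hab : ∀ ξ η, a ξ ≤ b η)
    {r r' : Amb κ lam} (hr : r ∈ PstarCond κ lam) (hr' : r' ∈ PstarCond κ lam) :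
    sigmaM κ lam a b (r ⊔ r') = sigmaM κ lam a b r ⊔ sigmaM κ lam a b r' := by
  have extendBot_le {α β} (hα : α < κ.ord) (hβ : β < lam.ord) :
      extendBot a α ≤ extendBot b β := by
    rw [extendBot_of_lt hα, extendBot_of_lt hβ]
    exact hab _ _
  simp only [sigmaM_eq, tail_sup]
  by_cases e : r.2.1 ∪ r.2.2 = ∅ <;> by_cases e' : r'.2.1 ∪ r'.2.2 = ∅
  · simp only [e, e', union_empty, if_true]
    rw [show (r ⊔ r').1 = r.1 ∪ r'.1 from rfl, image_union,
      csSup_union' (bddAbove_val_image _) (bddAbove_val_image _)]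
    exact ha.extendBot_max (hr e).sSup_val_image_lt (hr' e').sSup_val_image_lt
  · simp only [e, e', empty_union, if_true, if_false]
    exact (sup_eq_right.2 (extendBot_le (hr e).sSup_val_image_lt
      (nonempty_iff_ne_empty.2 e').sInf_val_image_lt)).symm
  · simp only [e, e', union_empty, if_true, if_false]
    exact (sup_eq_left.2 (extendBot_le (hr' e').sSup_val_image_lt
      (nonempty_iff_ne_empty.2 e).sInf_val_image_lt)).symm
  · have hne := nonempty_iff_ne_empty.2 e
    have hne' := nonempty_iff_ne_empty.2 e'
    rw [if_neg (by simp [e]), if_neg e, if_neg e', image_union,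
      csInf_union (OrderBot.bddBelow _) (hne.image _) (OrderBot.bddBelow _) (hne'.image _)]
    exact hb.extendBot_min hne.sInf_val_image_lt hne'.sInf_val_image_lt

theorem sigmaM_mono (ha : Monotone a) (hb : Antitone b) (hab : ∀ ξ η, a ξ ≤ b η)
    {r r' : Amb κ lam} (hr : r ∈ PstarCond κ lam) (hr' : r' ∈ PstarCond κ lam) (h : r ≤ r') :
    sigmaM κ lam a b r ≤ sigmaM κ lam a b r' := by
  rw [← sup_eq_right.2 h, sigmaM_sup ha hb hab hr hr']
  exact le_sup_left

theorem sigmaM_finset_sup (ha : Monotone a) (hb : Antitone b) (hab : ∀ ξ η, a ξ ≤ b η)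
    {ι : Type*} {X : Finset ι} (hX : X.Nonempty) {g : ι → Amb κ lam}
    (hg : ∀ i ∈ X, g i ∈ PstarCond κ lam) :
    sigmaM κ lam a b (X.sup g) = X.sup fun i => sigmaM κ lam a b (g i) := by
  induction hX using Finset.Nonempty.cons_induction with
  | singleton i => simp
  | cons i X hiX hX ih =>
    have hgX : ∀ j ∈ X, g j ∈ PstarCond κ lam := fun j hj => hg j (Finset.mem_cons_of_mem hj)
    rw [Finset.sup_cons, Finset.sup_cons, sigmaM_sup ha hb hab (hg i (Finset.mem_cons_self i X))
      (Finset.sup'_eq_sup hX g ▸ supClosed_pstarCond.finsetSup'_mem hX hgX), ih hgX]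

theorem sigmaM_bot (hκ : 0 < κ.ord) (ha0 : ∀ ξ : Iio κ.ord, (ξ : Ordinal) = 0 → a ξ = ⊥) :
    sigmaM κ lam a b ⊥ = ⊥ := by
  simp only [sigmaM_eq, Prod.snd_bot, Prod.fst_bot, bot_eq_empty, union_self, if_true,
    image_empty, csSup_empty, Ordinal.bot_eq_zero]
  rw [extendBot_of_lt hκ]
  exact ha0 _ rfl

theorem sdiff_mem_pstarCond (hκ : 0 < κ.ord) {x y : Amb κ lam} (hx : x ∈ PkSet κ lam)
    (hy : y ∈ PkSet κ lam) : x \ y ∈ PstarCond κ lam := by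
  intro h
  obtain ⟨h₁, h₂⟩ := union_empty_iff.1 h
  have hχ : chiO κ.ord x.1 ≤ chiO κ.ord y.1 := by
    rw [hx.2, hy.2]
    exact sup_le_sup (chiO_mono (sdiff_eq_empty.1 h₁)) (chiO_mono (sdiff_eq_empty.1 h₂))
  cases hx₀ : chiO κ.ord x.1
  · exact (chiO_eq_false_iff_s9.1 hx₀).mono sdiff_subset
  · have : Nonempty (Iio κ.ord) := ⟨⟨0, hκ⟩⟩
    have hy₀ : ¬ y.1.Bounded (· < ·) := fun hy₀ => by
      rw [hx₀, chiO_eq_false_iff_s9.2 hy₀] at hχ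
      exact absurd hχ (by decide)
    exact ((hy.1.1.bounded_or_bounded_compl).resolve_left hy₀).mono fun β hβ => hβ.2

end Measure

theorem mu_is_measure_general (κ lam : Cardinal) (hκ : ℵ₀ ≤ κ)
    {S : Type*} [SemilatticeSup S] [OrderBot S]
    (a : ↥(Set.Iio κ.ord) → S) (b : ↥(Set.Iio lam.ord) → S)
    (ha : Monotone a) (hb : Antitone b)
    (ha0 : ∀ ξ : ↥(Set.Iio κ.ord), (ξ : Ordinal) = 0 → a ξ = ⊥)
    (hab : ∀ ξ η, a ξ ≤ b η) :
    (∀ x ∈ PkSet κ lam, ∀ y ∈ PkSet κ lam, x ≤ y → muM κ lam a b x y = ⊥) ∧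
    (∀ x ∈ PkSet κ lam, ∀ y ∈ PkSet κ lam, ∀ z ∈ PkSet κ lam,
      muM κ lam a b x z ≤ muM κ lam a b x y ⊔ muM κ lam a b y z) ∧
    (∀ X : Finset (Amb κ lam), X.Nonempty → ↑X ⊆ PkSet κ lam → X.sup id ∈ PkSet κ lam →
      ∀ q ∈ PkSet κ lam, muM κ lam a b (X.sup id) q = X.sup fun x => muM κ lam a b x q) ∧
    (∀ Y : Finset (Amb κ lam), Y.Nonempty → ↑Y ⊆ PkSet κ lam → Y.inf id ∈ PkSet κ lam →
      ∀ p ∈ PkSet κ lam, muM κ lam a b p (Y.inf id) = Y.sup fun y => muM κ lam a b p y) := by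
  have hκ₀ : 0 < κ.ord := Cardinal.ord_pos.2 (aleph0_pos.trans_le hκ)
  have hsd {x y} (hx : x ∈ PkSet κ lam) (hy : y ∈ PkSet κ lam) := sdiff_mem_pstarCond hκ₀ hx hy
  refine ⟨?_, ?_, ?_, ?_⟩
  · intro x _ y _ hxy
    rw [muM, sdiff_eq_bot_iff.2 hxy, sigmaM_bot hκ₀ ha0]
  · intro x hx y hy z hz
    rw [muM, muM, muM, ← sigmaM_sup ha hb hab (hsd hx hy) (hsd hy hz)]
    exact sigmaM_mono ha hb hab (hsd hx hz)
      (supClosed_pstarCond (hsd hx hy) (hsd hy hz)) (sdiff_triangle x y z)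
  · intro X hX hXP _ q hq
    rw [muM, ← Finset.sup_sdiff_right X id q]
    exact sigmaM_finset_sup ha hb hab hX fun x hx => hsd (hXP hx) hq
  · intro Y hY hYP _ p hp
    rw [muM, ← Finset.sup_sdiff_left Y id p]
    exact sigmaM_finset_sup ha hb hab hY fun y hy => hsd hp (hYP hy)

/-- Under the same hypotheses as Statement 8, the map
`μ(x, y) = σ(x \ y)` is an `S`-valued measure on the partial lattice `P_{κ,λ}`:
(1) `μ(x,y) = 0` whenever `x ≤ y`;
(2) `μ(x,z) ≤ μ(x,y) ∨ μ(y,z)`;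
(3) `μ(a,b) = ⋁_{x∈X} μ(x,b)` whenever `X` is a nonempty finite subset of `P_{κ,λ}`
whose join, computed in `A_{κ,λ}`, lies in `P_{κ,λ}` (and equals `a`);
(4) `μ(a,b) = ⋁_{y∈Y} μ(a,y)` whenever `Y` is a nonempty finite subset of `P_{κ,λ}`
whose meet, computed in `A_{κ,λ}`, lies in `P_{κ,λ}` (and equals `b`). -/
theorem mu_is_measure (κ lam : Cardinal) (hκ : ℵ₀ ≤ κ) (hlam : ℵ₀ ≤ lam)
    {S : Type*} [SemilatticeSup S] [OrderBot S]
    (a : ↥(Set.Iio κ.ord) → S) (b : ↥(Set.Iio lam.ord) → S)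
    (ha : Monotone a) (hb : Antitone b)
    (ha0 : ∀ ξ : ↥(Set.Iio κ.ord), (ξ : Ordinal) = 0 → a ξ = ⊥)
    (hab : ∀ ξ η, a ξ ≤ b η) :
    (∀ x ∈ PkSet κ lam, ∀ y ∈ PkSet κ lam, x ≤ y → muM κ lam a b x y = ⊥) ∧
    (∀ x ∈ PkSet κ lam, ∀ y ∈ PkSet κ lam, ∀ z ∈ PkSet κ lam,
      muM κ lam a b x z ≤ muM κ lam a b x y ⊔ muM κ lam a b y z) ∧
    (∀ X : Finset (Amb κ lam), X.Nonempty → ↑X ⊆ PkSet κ lam → X.sup id ∈ PkSet κ lam →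
      ∀ q ∈ PkSet κ lam, muM κ lam a b (X.sup id) q = X.sup fun x => muM κ lam a b x q) ∧
    (∀ Y : Finset (Amb κ lam), Y.Nonempty → ↑Y ⊆ PkSet κ lam → Y.inf id ∈ PkSet κ lam →
      ∀ p ∈ PkSet κ lam, muM κ lam a b p (Y.inf id) = Y.sup fun y => muM κ lam a b p y) :=
  mu_is_measure_general κ lam hκ a b ha hb ha0 hab
end
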